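/- arXiv:1108.3524 — 8 statements merged into one kernel-verified Lean document; each statement's English description precedes it below -/
import Mathlib

section
/- Let α be a primitive element of F_q, 1 ≤ k ≤ q-3, d = q-k, g(x) = Π_{i=1}^{d-1}(x-α^i), and g_1(x) = g(x)/(x-α) = Π_{i=2}^{d-1}(x-α^i). Then for every m(x) ∈ F_q[x] with deg m ≤ k-1, the polynomial g_1(x)·(1 - m(x)(x-α)) has at least q-1-k nonzero coefficients. -/
open Polynomial Finset

private lemma pow_inj_of_lt {F : Type*} [Field F] {α : F} {n : ℕ} (hα : orderOf α = n)
    (hα0 : α ≠ 0) {i j : ℕ} (hi : i < n) (hj : j < n) (h : α ^ i = α ^ j) : i = j := by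
  wlog hij : i ≤ j generalizing i j
  · exact (this hj hi h.symm (le_of_not_ge hij)).symm
  have hji : α ^ j = α ^ i * α ^ (j - i) := by
    rw [← pow_add]; congr 1; omega
  have h1 : α ^ (j - i) = 1 := by
    apply mul_left_cancel₀ (pow_ne_zero i hα0)
    rw [mul_one, ← hji, h]
  have hdvd : n ∣ (j - i) := hα ▸ orderOf_dvd_of_pow_eq_one h1
  have := Nat.eq_zero_of_dvd_of_lt hdvd
  omega

private lemma vanish_key {F : Type*} [Field F] {α : F} {n : ℕ} (hα : orderOf α = n)
    (hα0 : α ≠ 0) :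
    ∀ t (f : F[X]), f.support.card = t → f.natDegree < n →
      ∀ b, (∀ i ∈ Finset.Ico b (b + t), f.eval (α ^ i) = 0) → f = 0 := by
  intro t
  induction t with
  | zero =>
    intro f hcard _ _ _
    exact Polynomial.support_eq_empty.mp (Finset.card_eq_zero.mp hcard)
  | succ t ih =>
    intro f hcard hdeg b hvanish
    by_contra hf0
    have hj₀mem : f.natDegree ∈ f.support := Polynomial.natDegree_mem_support_of_nonzero hf0
    set j₀ := f.natDegree with hj₀
    set g : F[X] := ∑ j ∈ Finset.range (j₀ + 1),
        Polynomial.C (f.coeff j * (α ^ j - α ^ j₀)) * Polynomial.X ^ j with hg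
    have hgcoeff : ∀ j, g.coeff j = f.coeff j * (α ^ j - α ^ j₀) := by
      intro j
      rw [hg, Polynomial.finset_sum_coeff]
      simp only [Polynomial.coeff_C_mul, Polynomial.coeff_X_pow, mul_ite, mul_one, mul_zero]
      rw [Finset.sum_ite_eq (Finset.range (j₀ + 1)) j
        (fun j' => f.coeff j' * (α ^ j' - α ^ j₀))]
      by_cases h : j ∈ Finset.range (j₀ + 1)
      · simp [h]
      · have : f.coeff j = 0 := by
          apply Polynomial.coeff_eq_zero_of_natDegree_lt
          simp only [Finset.mem_range] at h
          omega
        simp [h, this]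
    have hgsupp : g.support = f.support.erase j₀ := by
      ext j
      simp only [Polynomial.mem_support_iff, hgcoeff, Finset.mem_erase, mul_ne_zero_iff,
        sub_ne_zero]
      constructor
      · rintro ⟨hc, hne⟩
        exact ⟨fun hjj => hne (by rw [hjj]), hc⟩
      · rintro ⟨hjj, hc⟩
        refine ⟨hc, fun heq => hjj ?_⟩
        exact pow_inj_of_lt hα hα0
          (lt_of_le_of_lt (Polynomial.le_natDegree_of_ne_zero hc) hdeg) hdeg heq
    have hgdeg : g.natDegree < n := by
      apply lt_of_le_of_lt _ hdeg
      rw [Polynomial.natDegree_le_iff_coeff_eq_zero]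
      intro N hN
      rw [hgcoeff, Polynomial.coeff_eq_zero_of_natDegree_lt hN, zero_mul]
    have hgcard : g.support.card = t := by
      rw [hgsupp, Finset.card_erase_of_mem hj₀mem, hcard]
      omega
    have hgvanish : ∀ i ∈ Finset.Ico b (b + t), g.eval (α ^ i) = 0 := by
      intro i hi
      simp only [Finset.mem_Ico] at hi
      have h1 : f.eval (α ^ i) = 0 :=
        hvanish i (Finset.mem_Ico.mpr ⟨hi.1, by omega⟩)
      have h2 : f.eval (α ^ (i + 1)) = 0 :=
        hvanish (i + 1) (Finset.mem_Ico.mpr ⟨by omega, by omega⟩)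
      have heval : g.eval (α ^ i) = f.eval (α ^ (i + 1)) - α ^ j₀ * f.eval (α ^ i) := by
        rw [hg, Polynomial.eval_finset_sum,
            Polynomial.eval_eq_sum_range, Polynomial.eval_eq_sum_range,
            Finset.mul_sum, ← Finset.sum_sub_distrib]
        refine Finset.sum_congr rfl fun j _ => ?_
        simp only [Polynomial.eval_mul, Polynomial.eval_C, Polynomial.eval_pow,
          Polynomial.eval_X]
        have hp : (α ^ (i + 1)) ^ j = α ^ j * (α ^ i) ^ j := by
          rw [pow_succ', mul_pow]
        rw [hp]; ring
      rw [heval, h1, h2, mul_zero, sub_zero]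
    have hg0 : g = 0 := ih g hgcard hgdeg b hgvanish
    have herase : f.support.erase j₀ = ∅ := by
      rw [← hgsupp, hg0, Polynomial.support_zero]
    have ht0 : t = 0 := by
      have := Finset.card_erase_of_mem hj₀mem
      rw [herase, hcard] at this
      simpa using this.symm
    have hsupp : f.support = {j₀} := by
      apply Finset.eq_singleton_iff_unique_mem.mpr
      refine ⟨hj₀mem, fun x hx => ?_⟩
      by_contra hne
      have : x ∈ f.support.erase j₀ := Finset.mem_erase.mpr ⟨hne, hx⟩
      rw [herase] at this
      exact absurd this (Finset.notMem_empty x)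
    have hb : f.eval (α ^ b) = 0 := by
      apply hvanish
      rw [Finset.mem_Ico]
      omega
    rw [Polynomial.eval_eq_sum, Polynomial.sum_def, hsupp, Finset.sum_singleton] at hb
    have hc0 : f.coeff j₀ = 0 := by
      rcases mul_eq_zero.mp hb with h | h
      · exact h
      · exact absurd h (pow_ne_zero _ (pow_ne_zero _ hα0))
    exact (Polynomial.mem_support_iff.mp hj₀mem) hc0

/-- g₁(x)(1 - m(x)(x-α)) has at least q-1-k nonzero coefficients. -/
theorem weight_g1_mul {F : Type*} [Field F] [Fintype F]
    (α : F) (hα : orderOf α = Fintype.card F - 1)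
    (k d : ℕ) (hk1 : 1 ≤ k) (hk2 : k ≤ Fintype.card F - 3)
    (hd : d = Fintype.card F - k)
    (g₁ : F[X]) (hg1 : g₁ = ∏ i ∈ Finset.Icc 2 (d - 1), (X - C (α ^ i)))
    (m : F[X]) (hm : m.natDegree ≤ k - 1) :
    Fintype.card F - 1 - k ≤ (g₁ * (1 - m * (X - C α))).support.card := by
  set q := Fintype.card F with hq
  have hq4 : 4 ≤ q := by omega
  have hα0 : α ≠ 0 := by
    intro h
    have h1 := pow_orderOf_eq_one α
    rw [hα, h, zero_pow (by omega : q - 1 ≠ 0)] at h1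
    exact zero_ne_one h1
  set f : F[X] := g₁ * (1 - m * (X - C α)) with hf
  -- g₁ evaluated at α is nonzero
  have hg1α : g₁.eval α ≠ 0 := by
    rw [hg1, Polynomial.eval_prod]
    rw [Finset.prod_ne_zero_iff]
    intro i hi
    simp only [Finset.mem_Icc] at hi
    simp only [Polynomial.eval_sub, Polynomial.eval_X, Polynomial.eval_C, sub_ne_zero]
    intro heq
    have h1 : (1 : ℕ) = i := by
      apply pow_inj_of_lt hα hα0 (by omega) (by omega)
      rw [pow_one]; exact heq
    omega
  have hfne : f ≠ 0 := by
    intro h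
    have : f.eval α = 0 := by rw [h, Polynomial.eval_zero]
    rw [hf] at this
    simp only [Polynomial.eval_mul, Polynomial.eval_sub, Polynomial.eval_one,
      Polynomial.eval_X, Polynomial.eval_C, sub_self, mul_zero, sub_zero, mul_one] at this
    exact hg1α this
  have hg1deg : g₁.natDegree = d - 2 := by
    rw [hg1, Polynomial.natDegree_prod _ _ fun i _ => Polynomial.X_sub_C_ne_zero (α ^ i)]
    simp only [Polynomial.natDegree_X_sub_C]
    rw [Finset.sum_const, Nat.card_Icc, smul_eq_mul, mul_one]
    omega
  have h2deg : (1 - m * (X - C α)).natDegree ≤ k := by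
    refine le_trans (Polynomial.natDegree_sub_le _ _) ?_
    rw [Polynomial.natDegree_one]
    refine max_le (by omega) (le_trans Polynomial.natDegree_mul_le ?_)
    rw [Polynomial.natDegree_X_sub_C]
    omega
  have hfdeg : f.natDegree < q - 1 := by
    have := Polynomial.natDegree_mul_le (p := g₁) (q := 1 - m * (X - C α))
    rw [hg1deg] at this
    rw [hf]
    omega
  have hvan : ∀ i, 2 ≤ i → i ≤ d - 1 → f.eval (α ^ i) = 0 := by
    intro i h2 hle
    have hgz : g₁.eval (α ^ i) = 0 := by
      rw [hg1, Polynomial.eval_prod]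
      exact Finset.prod_eq_zero (Finset.mem_Icc.mpr ⟨h2, hle⟩) (by simp)
    rw [hf, Polynomial.eval_mul, hgz, zero_mul]
  by_contra hcon
  push_neg at hcon
  set t := f.support.card with ht
  have ht' : t ≤ d - 2 := by omega
  have hf0 : f = 0 := by
    apply vanish_key hα hα0 t f rfl hfdeg 2
    intro i hi
    simp only [Finset.mem_Ico] at hi
    exact hvan i hi.1 (by omega)
  exact hfne hf0
end

section
/- Let α be a primitive element of F_q, 2 ≤ k ≤ q-2, d = q-k, g(x) = Π_{i=1}^{d-1}(x-α^i), g_1(x) = g(x)/(x-α). Then for any a ∈ F_q^* and any l(x) ∈ F_q[x] with deg l ≤ k-1, the minimum Hamming distance (as coefficient vectors of polynomials of degree ≤ q-2) from a·g_1(x) + l(x)g(x) to the code C = {m(x)g(x) : deg m ≤ k-1} equals q-1-k. -/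
open Polynomial Finset

/-- BCH-type bound: a nonzero polynomial of degree `< orderOf α` that vanishes at
`α^2, …, α^(D+1)` has at least `D+1` nonzero coefficients. -/
lemma bch_support_card {F : Type*} [Field F] [DecidableEq F]
    (α : F) (hα0 : α ≠ 0) (f : F[X]) (hf : f ≠ 0)
    (hdeg : f.natDegree < orderOf α)
    (D : ℕ) (hev : ∀ i ∈ Finset.Icc 2 (D + 1), f.eval (α ^ i) = 0) :
    D + 1 ≤ f.support.card := by
  by_contra hcon
  push_neg at hcon
  set t := f.support.card with ht
  have htD : t ≤ D := by omega
  have σ := f.support.orderIsoOfFin rfl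
  set s : Fin t → ℕ := fun j => ((σ j : f.support) : ℕ) with hs
  have hs_mem : ∀ j, s j ∈ f.support := fun j => (σ j).2
  have hs_inj : Function.Injective s := by
    intro a b hab
    exact σ.injective (Subtype.ext hab)
  have hs_lt : ∀ j, s j < orderOf α := fun j =>
    lt_of_le_of_lt (Polynomial.le_natDegree_of_mem_supp _ (hs_mem j)) hdeg
  set v : Fin t → F := fun j => α ^ s j with hv
  have hv0 : ∀ j, v j ≠ 0 := fun j => pow_ne_zero _ hα0
  have key : ∀ p q : ℕ, p ≤ q → q < orderOf α → α ^ p = α ^ q → p = q := by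
    intro p q hpq hq h
    have h1 : α ^ p * α ^ (q - p) = α ^ p * 1 := by
      rw [mul_one, ← pow_add, show p + (q - p) = q by omega, ← h]
    have h2 : α ^ (q - p) = 1 := mul_left_cancel₀ (pow_ne_zero p hα0) h1
    have h4 : q - p = 0 := Nat.eq_zero_of_dvd_of_lt (orderOf_dvd_of_pow_eq_one h2) (by omega)
    omega
  have hv_inj : Function.Injective v := by
    intro a b hab
    apply hs_inj
    rcases le_total (s a) (s b) with hle | hle
    · exact key _ _ hle (hs_lt b) hab
    · exact (key _ _ hle (hs_lt a) hab.symm).symm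
  -- the linear system
  have hsum : ∀ i : ℕ, f.eval (α ^ i) = ∑ j : Fin t, f.coeff (s j) * (v j) ^ i := by
    intro i
    rw [Polynomial.eval_eq_sum, Polynomial.sum_def]
    rw [← Finset.sum_attach f.support (fun e => f.coeff e * (α ^ i) ^ e),
      ← Finset.univ_eq_attach,
      ← σ.toEquiv.sum_comp (fun e : f.support => f.coeff e * (α ^ i) ^ (e : ℕ))]
    refine Finset.sum_congr rfl fun j _ => ?_
    show f.coeff (s j) * (α ^ i) ^ (s j) = f.coeff (s j) * (α ^ (s j)) ^ i
    rw [← pow_mul, ← pow_mul, Nat.mul_comm]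
  have hsys : (fun j : Fin t => f.coeff (s j) * v j ^ 2) = 0 := by
    apply Matrix.eq_zero_of_vecMul_eq_zero
      (Matrix.det_vandermonde_ne_zero_iff.mpr hv_inj)
    funext r
    have h0 : f.eval (α ^ (r.val + 2)) = 0 := by
      apply hev
      simp only [Finset.mem_Icc]
      omega
    rw [hsum] at h0
    simp only [Pi.zero_apply]
    rw [← h0]
    simp only [Matrix.vecMul, dotProduct, Matrix.vandermonde, Matrix.of_apply]
    refine Finset.sum_congr rfl fun j _ => ?_
    simp only [hv]
    rw [pow_add]
    ring
  have hcoeff : ∀ j : Fin t, f.coeff (s j) = 0 := by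
    intro j
    have := congrFun hsys j
    simp only [Pi.zero_apply, mul_eq_zero] at this
    rcases this with h | h
    · exact h
    · exact absurd h (pow_ne_zero _ (hv0 j))
  -- contradiction: support is nonempty
  obtain ⟨e, he⟩ := Polynomial.nonempty_support_iff.mpr hf
  obtain ⟨j, hj⟩ := σ.surjective ⟨e, he⟩
  have : f.coeff e ≠ 0 := Polynomial.mem_support_iff.mp he
  apply this
  have : s j = e := by show ((σ j : f.support) : ℕ) = e; rw [hj]
  rw [← this]
  exact hcoeff j

lemma card_filter_coeff {F : Type*} [Semiring F] [DecidableEq F]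
    (P : F[X]) (n : ℕ) (h : P.natDegree < n) :
    (Finset.univ.filter fun i : Fin n => P.coeff i.val ≠ 0).card = P.support.card := by
  apply Finset.card_bij (fun (i : Fin n) _ => i.val)
  · intro i hi
    simp only [Finset.mem_filter] at hi
    exact Polynomial.mem_support_iff.mpr hi.2
  · intro i _ j _ hij
    exact Fin.ext hij
  · intro b hb
    have hb' : b < n := lt_of_le_of_lt (Polynomial.le_natDegree_of_mem_supp _ hb) h
    exact ⟨⟨b, hb'⟩, by simp [Polynomial.mem_support_iff.mp hb], rfl⟩

/-- a·g₁ + l·g is a deep hole of the cyclic-code version of the standard RS code: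
its distance to the code is exactly q-1-k. -/
theorem deep_hole_g1 {F : Type*} [Field F] [Fintype F] [DecidableEq F]
    (α : F) (hα : orderOf α = Fintype.card F - 1)
    (k d : ℕ) (hk1 : 2 ≤ k) (hk2 : k ≤ Fintype.card F - 2)
    (hd : d = Fintype.card F - k)
    (g : F[X]) (hg : g = ∏ i ∈ Finset.Icc 1 (d - 1), (X - C (α ^ i)))
    (g₁ : F[X]) (hg1 : g₁ = ∏ i ∈ Finset.Icc 2 (d - 1), (X - C (α ^ i)))
    (a : F) (ha : a ≠ 0) (l : F[X]) (hl : l.natDegree ≤ k - 1) :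
    IsLeast {n : ℕ | ∃ m : F[X], m.natDegree ≤ k - 1 ∧
        n = hammingDist
          (fun i : Fin (Fintype.card F - 1) => (C a * g₁ + l * g).coeff i.val)
          (fun i : Fin (Fintype.card F - 1) => (m * g).coeff i.val)}
      (Fintype.card F - 1 - k) := by
  set q := Fintype.card F with hq
  have hq4 : 4 ≤ q := by omega
  have hkq : k + 2 ≤ q := by omega
  have hd2 : 2 ≤ d := by omega
  have hα0 : α ≠ 0 := by
    intro h0
    have h1 : α ^ (q - 1) = 1 := by rw [← hα]; exact pow_orderOf_eq_one α
    rw [h0, zero_pow (by omega)] at h1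
    exact zero_ne_one h1
  -- basic facts about g and g₁
  have hg1monic : g₁.Monic := by
    rw [hg1]; exact monic_prod_of_monic _ _ fun i _ => monic_X_sub_C _
  have hgmonic : g.Monic := by
    rw [hg]; exact monic_prod_of_monic _ _ fun i _ => monic_X_sub_C _
  have hdegg1 : g₁.natDegree = d - 2 := by
    rw [hg1, natDegree_prod_of_monic _ _ fun i _ => monic_X_sub_C _]
    simp only [natDegree_X_sub_C]
    rw [Finset.sum_const, Nat.card_Icc, smul_eq_mul, mul_one]
    omega
  have hdegg : g.natDegree = d - 1 := by
    rw [hg, natDegree_prod_of_monic _ _ fun i _ => monic_X_sub_C _]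
    simp only [natDegree_X_sub_C]
    rw [Finset.sum_const, Nat.card_Icc, smul_eq_mul, mul_one]
    omega
  have hfact : g = (X - C α) * g₁ := by
    rw [hg, hg1]
    rw [show Finset.Icc 1 (d - 1) = insert 1 (Finset.Icc 2 (d - 1)) by
      ext x; simp only [Finset.mem_Icc, Finset.mem_insert]; omega]
    rw [Finset.prod_insert (by simp)]
    rw [pow_one]
  have hg1eval : ∀ i ∈ Finset.Icc 2 (d - 1), g₁.eval (α ^ i) = 0 := by
    intro i hi
    rw [hg1, eval_prod]
    apply Finset.prod_eq_zero hi
    simp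
  -- the distance formula: for any m, the hamming distance is the weight of
  -- C a * g₁ + (l - m) * g
  have hdist : ∀ m : F[X], m.natDegree ≤ k - 1 →
      hammingDist
          (fun i : Fin (q - 1) => (C a * g₁ + l * g).coeff i.val)
          (fun i : Fin (q - 1) => (m * g).coeff i.val)
        = (C a * g₁ + (l - m) * g).support.card := by
    intro m hm
    have hdegP : (C a * g₁ + (l - m) * g).natDegree < q - 1 := by
      apply lt_of_le_of_lt (natDegree_add_le _ _)
      have h1 : (C a * g₁).natDegree ≤ d - 2 := by
        apply le_trans (natDegree_mul_le)
        simp [hdegg1]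
      have h2 : ((l - m) * g).natDegree ≤ (k - 1) + (d - 1) := by
        apply le_trans (natDegree_mul_le)
        have := natDegree_sub_le l m
        omega
      have : (k - 1) + (d - 1) = q - 2 := by omega
      omega
    rw [← card_filter_coeff _ (q - 1) hdegP]
    unfold hammingDist
    congr 1
    apply Finset.filter_congr
    intro i _
    have : (C a * g₁ + (l - m) * g).coeff i.val
        = (C a * g₁ + l * g).coeff i.val - (m * g).coeff i.val := by
      rw [← coeff_sub]
      congr 1
      ring
    rw [this]
    simp [sub_ne_zero]
  -- lower bound part: any distance is at least q - 1 - k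
  have hlower : ∀ m : F[X], m.natDegree ≤ k - 1 →
      q - 1 - k ≤ (C a * g₁ + (l - m) * g).support.card := by
    intro m hm
    set u : F[X] := C a + (l - m) * (X - C α) with hu
    have hPu : C a * g₁ + (l - m) * g = u * g₁ := by
      rw [hfact, hu]; ring
    have hu0 : u ≠ 0 := by
      intro h0
      have : u.eval α = a := by simp [hu]
      rw [h0] at this
      simp at this
      exact ha this.symm
    have hP0 : C a * g₁ + (l - m) * g ≠ 0 := by
      rw [hPu]; exact mul_ne_zero hu0 hg1monic.ne_zero
    have hdegP : (C a * g₁ + (l - m) * g).natDegree < q - 1 := by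
      apply lt_of_le_of_lt (natDegree_add_le _ _)
      have h1 : (C a * g₁).natDegree ≤ d - 2 := by
        apply le_trans (natDegree_mul_le); simp [hdegg1]
      have h2 : ((l - m) * g).natDegree ≤ (k - 1) + (d - 1) := by
        apply le_trans (natDegree_mul_le)
        have := natDegree_sub_le l m
        omega
      omega
    have hbch := bch_support_card α hα0 (C a * g₁ + (l - m) * g) hP0
      (by rw [hα]; exact hdegP) (d - 2)
      (by
        intro i hi
        rw [show d - 2 + 1 = d - 1 by omega] at hi
        rw [hPu, eval_mul, hg1eval i hi, mul_zero])
    omega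
  constructor
  · -- membership : exhibit m achieving distance q - 1 - k
    set c : F := a * (α ^ k)⁻¹ with hc
    have hαk : α ^ k ≠ 0 := pow_ne_zero _ hα0
    have hc0 : c ≠ 0 := by
      simp only [hc]
      exact mul_ne_zero ha (inv_ne_zero hαk)
    have hdvd : (X - C α) ∣ (C c * X ^ k - C a) := by
      rw [dvd_iff_isRoot]
      simp only [IsRoot, eval_sub, eval_mul, eval_C, eval_pow, eval_X]
      rw [hc]
      field_simp
      simp
    obtain ⟨h, hh⟩ := hdvd
    have hdeg_ck : (C c * X ^ k - C a).natDegree = k := by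
      rw [natDegree_sub_C, natDegree_C_mul_X_pow _ _ hc0]
    have hh0 : h ≠ 0 := by
      intro h0
      rw [h0, mul_zero] at hh
      rw [hh] at hdeg_ck
      simp at hdeg_ck
      omega
    have hdegh : h.natDegree = k - 1 := by
      have h1 := hdeg_ck
      rw [hh, natDegree_mul (X_sub_C_ne_zero α) hh0, natDegree_X_sub_C] at h1
      omega
    refine ⟨l - h, ?_, ?_⟩
    · apply le_trans (natDegree_sub_le l h)
      omega
    · rw [hdist (l - h) (le_trans (natDegree_sub_le l h) (by omega))]
      have hLH : l - (l - h) = h := by ring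
      rw [hLH]
      have hPQ : C a * g₁ + h * g = C c * X ^ k * g₁ := by
        rw [hfact]
        have : C a + h * (X - C α) = C c * X ^ k := by
          have := hh
          linear_combination -this
        linear_combination g₁ * this
      rw [hPQ]
      set Q : F[X] := C c * X ^ k * g₁ with hQ
      have hQ0 : Q ≠ 0 := by
        apply mul_ne_zero (mul_ne_zero (by simpa using hc0) (pow_ne_zero _ X_ne_zero))
          hg1monic.ne_zero
      have hdegQ : Q.natDegree ≤ k + (d - 2) := by
        apply le_trans natDegree_mul_le
        have : (C c * X ^ k).natDegree ≤ k := by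
          apply le_trans natDegree_mul_le
          simp
        omega
      -- upper bound for the weight of Q
      have hsub : Q.support ⊆ Finset.Icc k (k + (d - 2)) := by
        intro j hj
        simp only [Finset.mem_Icc]
        constructor
        · by_contra hjk
          push_neg at hjk
          have : Q.coeff j = 0 := by
            rw [hQ, show C c * X ^ k * g₁ = C c * g₁ * X ^ k by ring,
              coeff_mul_X_pow']
            simp [Nat.not_le.mpr hjk]
          exact Polynomial.mem_support_iff.mp hj this
        · exact le_trans (Polynomial.le_natDegree_of_mem_supp _ hj) hdegQ
      have hcard_le : Q.support.card ≤ d - 1 := by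
        apply le_trans (Finset.card_le_card hsub)
        rw [Nat.card_Icc]
        omega
      -- lower bound for the weight of Q
      have hQeval : ∀ i ∈ Finset.Icc 2 (d - 2 + 1), Q.eval (α ^ i) = 0 := by
        intro i hi
        rw [show d - 2 + 1 = d - 1 by omega] at hi
        rw [hQ, eval_mul, hg1eval i hi, mul_zero]
      have hbch := bch_support_card α hα0 Q hQ0
        (by rw [hα]; omega) (d - 2) hQeval
      omega
  · -- lower bound
    rintro x ⟨m, hm, hx⟩
    rw [hx, hdist m hm]
    exact hlower m hm
end

section
/- Let α be a primitive element of F_q, 2 ≤ k ≤ q-2, d = q-k, g(x) = Π_{i=1}^{d-1}(x-α^i), g_2(x) = g(x)/(x-α^{d-1}). Then for any a ∈ F_q^* and any l(x) with deg l ≤ k-1, the word a·g_2(x)+l(x)g(x) is a deep hole of the code C = {m(x)g(x) : deg m ≤ k-1}, i.e., its Hamming distance to C equals q-1-k. -/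
open Polynomial Finset

lemma bch_bound {F : Type*} [Field F] [DecidableEq F] (α : F) (N : ℕ)
    (hα : orderOf α = N) (hα0 : α ≠ 0) (P : F[X]) (hP : P ≠ 0)
    (hdeg : P.natDegree < N) (t : ℕ)
    (hvan : ∀ i ∈ Finset.Icc 1 t, P.eval (α ^ i) = 0) :
    t < P.support.card := by
  by_contra hcon
  push_neg at hcon
  set w := P.support.card with hw
  let e : Fin w ≃o {x // x ∈ P.support} := P.support.orderIsoOfFin rfl
  set β : Fin w → F := fun j => α ^ ((e j : ℕ)) with hβ
  have hmem : ∀ j : Fin w, ((e j : ℕ)) < N := fun j =>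
    lt_of_le_of_lt (Polynomial.le_natDegree_of_mem_supp _ (e j).2) hdeg
  have hβinj : Function.Injective β := by
    intro j1 j2 h
    have h2 := pow_injOn_Iio_orderOf (x := α)
      (by rw [hα]; exact hmem j1) (by rw [hα]; exact hmem j2) h
    exact e.injective (Subtype.ext h2)
  have hβ0 : ∀ j, β j ≠ 0 := fun j => pow_ne_zero _ hα0
  set M : Matrix (Fin w) (Fin w) F := Matrix.of fun i j => β j ^ ((i : ℕ) + 1) with hM
  have hdet : M.det ≠ 0 := by
    have hMeq : M = (Matrix.vandermonde β).transpose * Matrix.diagonal β := by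
      ext i j
      simp [Matrix.mul_apply, Matrix.diagonal_apply, Matrix.vandermonde, hM,
        Finset.sum_ite_eq, pow_succ]
    rw [hMeq, Matrix.det_mul, Matrix.det_transpose, Matrix.det_vandermonde,
      Matrix.det_diagonal]
    refine mul_ne_zero (Finset.prod_ne_zero_iff.mpr fun i _ =>
      Finset.prod_ne_zero_iff.mpr fun j hj => ?_)
      (Finset.prod_ne_zero_iff.mpr fun j _ => hβ0 j)
    exact sub_ne_zero_of_ne fun h => (Finset.mem_Ioi.mp hj).ne' (hβinj h)
  have hmv : M.mulVec (fun j => P.coeff (e j)) = 0 := by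
    funext i
    have hle : (i : ℕ) + 1 ≤ t := Nat.succ_le_of_lt (lt_of_lt_of_le i.2 hcon)
    have hsum : P.eval (α ^ ((i : ℕ) + 1)) = 0 :=
      hvan _ (Finset.mem_Icc.mpr ⟨Nat.succ_le_succ (Nat.zero_le _), hle⟩)
    rw [Polynomial.eval_eq_sum, Polynomial.sum_def] at hsum
    have hre : ∑ s ∈ P.support, P.coeff s * (α ^ ((i : ℕ) + 1)) ^ s
        = ∑ j : Fin w, P.coeff (e j) * (α ^ ((i : ℕ) + 1)) ^ ((e j : ℕ)) := by
      rw [← Finset.sum_coe_sort P.support (fun s => P.coeff s * (α ^ ((i : ℕ) + 1)) ^ (s : ℕ))]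
      exact (Fintype.sum_equiv e.toEquiv _ _ (fun j => rfl)).symm
    simp only [Matrix.mulVec, dotProduct, Pi.zero_apply, hM, Matrix.of_apply]
    rw [show (0 : F) = ∑ j : Fin w, P.coeff (e j) * (α ^ ((i : ℕ) + 1)) ^ ((e j : ℕ)) from
      (hre ▸ hsum).symm]
    refine Finset.sum_congr rfl fun j _ => ?_
    rw [hβ, ← pow_mul, mul_comm ((e j : ℕ)) ((i : ℕ) + 1), pow_mul]
    ring
  have hv0 := Matrix.eq_zero_of_mulVec_eq_zero hdet hmv
  obtain ⟨s, hs⟩ := Polynomial.support_nonempty.mpr hP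
  have : P.coeff s = 0 := by
    have := congrFun hv0 (e.symm ⟨s, hs⟩)
    simpa using this
  exact (Polynomial.mem_support_iff.mp hs) this

lemma filter_card_eq_support {F : Type*} [Semiring F] [DecidableEq F] (n : ℕ) (P : F[X])
    (hdeg : P.natDegree < n) :
    (Finset.univ.filter fun i : Fin n => P.coeff i.val ≠ 0).card = P.support.card := by
  apply Finset.card_bij (fun i _ => i.val)
  · intro i hi; rw [Finset.mem_filter] at hi; exact Polynomial.mem_support_iff.mpr hi.2
  · intro i _ j _ h; exact Fin.ext h
  · intro s hs
    have hlt : s < n := lt_of_le_of_lt (Polynomial.le_natDegree_of_mem_supp _ hs) hdeg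
    exact ⟨⟨s, hlt⟩, Finset.mem_filter.mpr ⟨Finset.mem_univ _,
      Polynomial.mem_support_iff.mp hs⟩, rfl⟩

/-- a·g₂ + l·g is a deep hole of the cyclic-code version of the standard RS code. -/
theorem deep_hole_g2 {F : Type*} [Field F] [Fintype F] [DecidableEq F]
    (α : F) (hα : orderOf α = Fintype.card F - 1)
    (k d : ℕ) (hk1 : 2 ≤ k) (hk2 : k ≤ Fintype.card F - 2)
    (hd : d = Fintype.card F - k)
    (g : F[X]) (hg : g = ∏ i ∈ Finset.Icc 1 (d - 1), (X - C (α ^ i)))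
    (g₂ : F[X]) (hg2 : g₂ = ∏ i ∈ Finset.Icc 1 (d - 2), (X - C (α ^ i)))
    (a : F) (ha : a ≠ 0) (l : F[X]) (hl : l.natDegree ≤ k - 1) :
    IsLeast {n : ℕ | ∃ m : F[X], m.natDegree ≤ k - 1 ∧
        n = hammingDist
          (fun i : Fin (Fintype.card F - 1) => (C a * g₂ + l * g).coeff i.val)
          (fun i : Fin (Fintype.card F - 1) => (m * g).coeff i.val)}
      (Fintype.card F - 1 - k) := by
  set q := Fintype.card F with hq
  have hq4 : 4 ≤ q := by omega
  have hα0 : α ≠ 0 := by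
    intro h0
    have h1 : α ^ (q - 1) = 1 := hα ▸ pow_orderOf_eq_one α
    rw [h0, zero_pow (by omega)] at h1
    exact zero_ne_one h1
  -- basic eval facts
  have hgeval : ∀ i ∈ Finset.Icc 1 (d - 1), g.eval (α ^ i) = 0 := by
    intro i hi
    rw [hg, Polynomial.eval_prod]
    exact Finset.prod_eq_zero hi (by simp)
  have hg2eval : ∀ i ∈ Finset.Icc 1 (d - 2), g₂.eval (α ^ i) = 0 := by
    intro i hi
    rw [hg2, Polynomial.eval_prod]
    exact Finset.prod_eq_zero hi (by simp)
  have hg2ne : g₂.eval (α ^ (d - 1)) ≠ 0 := by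
    rw [hg2, Polynomial.eval_prod]
    refine Finset.prod_ne_zero_iff.mpr fun i hi => ?_
    rw [Finset.mem_Icc] at hi
    simp only [Polynomial.eval_sub, Polynomial.eval_X, Polynomial.eval_C]
    refine sub_ne_zero_of_ne fun h => ?_
    have h2 := pow_injOn_Iio_orderOf (x := α)
      (by rw [hα]; exact Set.mem_Iio.mpr (by omega))
      (by rw [hα]; exact Set.mem_Iio.mpr (by omega)) h
    omega
  -- degree facts
  have hg2deg : g₂.natDegree ≤ d - 2 := by
    rw [hg2]
    refine le_trans (Polynomial.natDegree_prod_le _ _) ?_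
    rw [Finset.sum_congr rfl fun x _ => Polynomial.natDegree_X_sub_C (α ^ x)]
    simp [Nat.card_Icc]
  have hgdeg : g.natDegree ≤ d - 1 := by
    rw [hg]
    refine le_trans (Polynomial.natDegree_prod_le _ _) ?_
    rw [Finset.sum_congr rfl fun x _ => Polynomial.natDegree_X_sub_C (α ^ x)]
    simp [Nat.card_Icc]
  -- the key: distance for any m equals support card of the difference poly
  have key : ∀ m : F[X], m.natDegree ≤ k - 1 →
      hammingDist
        (fun i : Fin (q - 1) => (C a * g₂ + l * g).coeff i.val)
        (fun i : Fin (q - 1) => (m * g).coeff i.val)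
        = (C a * g₂ + (l - m) * g).support.card ∧
      d - 1 ≤ (C a * g₂ + (l - m) * g).support.card := by
    intro m hm
    set P : F[X] := C a * g₂ + (l - m) * g with hP
    have hPdeg : P.natDegree < q - 1 := by
      refine lt_of_le_of_lt (Polynomial.natDegree_add_le _ _) ?_
      have h1 : (C a * g₂).natDegree ≤ 0 + (d - 2) :=
        le_trans (Polynomial.natDegree_mul_le)
          (add_le_add (le_of_eq (Polynomial.natDegree_C a)) hg2deg)
      have h2 : ((l - m) * g).natDegree ≤ (k - 1) + (d - 1) :=
        le_trans (Polynomial.natDegree_mul_le)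
          (add_le_add (le_trans (Polynomial.natDegree_sub_le _ _) (max_le hl hm)) hgdeg)
      refine max_lt (lt_of_le_of_lt h1 (by omega)) (lt_of_le_of_lt h2 (by omega))
    have hPev : P.eval (α ^ (d - 1)) ≠ 0 := by
      have hge : g.eval (α ^ (d - 1)) = 0 :=
        hgeval _ (Finset.mem_Icc.mpr ⟨by omega, le_refl _⟩)
      have : P.eval (α ^ (d - 1)) = a * g₂.eval (α ^ (d - 1)) := by
        simp [hP, hge]
      rw [this]
      exact mul_ne_zero ha hg2ne
    have hPne : P ≠ 0 := fun h => hPev (by simp [h])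
    have hvan : ∀ i ∈ Finset.Icc 1 (d - 2), P.eval (α ^ i) = 0 := by
      intro i hi
      rw [Finset.mem_Icc] at hi
      have h1 := hg2eval i (Finset.mem_Icc.mpr hi)
      have h2 := hgeval i (Finset.mem_Icc.mpr ⟨hi.1, by omega⟩)
      simp [hP, h1, h2]
    have hlow : d - 2 < P.support.card :=
      bch_bound α (q - 1) hα hα0 P hPne hPdeg (d - 2) hvan
    constructor
    · show (Finset.univ.filter fun i : Fin (q - 1) =>
          (C a * g₂ + l * g).coeff i.val ≠ (m * g).coeff i.val).card = _
      rw [← filter_card_eq_support (q - 1) P hPdeg]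
      congr 1
      refine Finset.filter_congr fun i _ => ?_
      have hcoe : P.coeff i.val = (C a * g₂ + l * g).coeff i.val - (m * g).coeff i.val := by
        rw [← Polynomial.coeff_sub]
        congr 1
        rw [hP]; ring
      rw [ne_eq, ← sub_eq_zero.not, ← hcoe, ne_eq]
    · omega
  constructor
  · refine ⟨l, hl, ?_⟩
    obtain ⟨heq, hlow⟩ := key l hl
    rw [heq]
    have hsub : (C a * g₂ + (l - l) * g) = C a * g₂ := by ring
    rw [hsub] at hlow ⊢
    have hub : (C a * g₂).support.card ≤ d - 1 := by
      refine le_trans (Polynomial.card_supp_le_succ_natDegree _) ?_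
      have h1 : (C a * g₂).natDegree ≤ 0 + (d - 2) :=
        le_trans (Polynomial.natDegree_mul_le)
          (add_le_add (le_of_eq (Polynomial.natDegree_C a)) hg2deg)
      omega
    omega
  · rintro n ⟨m, hm, rfl⟩
    obtain ⟨heq, hlow⟩ := key m hm
    rw [heq]
    omega
end

section
/- Let α be a primitive element of F_q, 2 ≤ k ≤ q-2, d = q-k, g(x) = Π_{i=1}^{d-1}(x-α^i), g_1(x) = g(x)/(x-α). For any polynomial u(x) = u_{q-2}x^{q-2} + Σ_{i=0}^{k-1} u_i x^i with u_{q-2} ≠ 0, there exist a ∈ F_q^* and l(x) ∈ F_q[x] with deg l ≤ k-1 such that a·g_1(x)+l(x)g(x) = Σ_{j=0}^{q-2} u(α^j) x^j (the DFT of u). -/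
open Polynomial Finset

/-- The DFT of u(x) = u_{q-2}x^{q-2} + (terms of degree < k) with u_{q-2} ≠ 0
is of the form a·g₁ + l·g. -/
theorem dft_of_special_word {F : Type*} [Field F] [Fintype F]
    (α : F) (hα : orderOf α = Fintype.card F - 1)
    (k d : ℕ) (hk1 : 2 ≤ k) (hk2 : k ≤ Fintype.card F - 2)
    (hd : d = Fintype.card F - k)
    (g : F[X]) (hg : g = ∏ i ∈ Finset.Icc 1 (d - 1), (X - C (α ^ i)))
    (g₁ : F[X]) (hg1 : g₁ = ∏ i ∈ Finset.Icc 2 (d - 1), (X - C (α ^ i)))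
    (u : F[X]) (hudeg : u.natDegree ≤ Fintype.card F - 2)
    (hutop : u.coeff (Fintype.card F - 2) ≠ 0)
    (humid : ∀ i : ℕ, k ≤ i → i ≤ Fintype.card F - 3 → u.coeff i = 0) :
    ∃ a : F, a ≠ 0 ∧ ∃ l : F[X], l.natDegree ≤ k - 1 ∧
      C a * g₁ + l * g =
        ∑ j ∈ Finset.range (Fintype.card F - 1), C (u.eval (α ^ j)) * X ^ j := by
  classical
  set q := Fintype.card F with hq
  have hq4 : 4 ≤ q := by omega
  set n := q - 1 with hn
  have hn3 : 3 ≤ n := by omega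
  have hα1 : α ^ n = 1 := by
    have := pow_orderOf_eq_one α
    rwa [hα] at this
  have hα0 : α ≠ 0 := by
    intro h
    rw [h, zero_pow (by omega)] at hα1
    exact zero_ne_one hα1
  have hcard : (q : F) = 0 := FiniteField.cast_card_eq_zero F
  have hnF : (n : F) = -1 := by
    rw [hn, Nat.cast_sub (by omega), hcard]
    ring
  -- geometric sum
  have hgeom : ∀ t : ℕ, ∑ j ∈ range n, (α ^ t) ^ j = if n ∣ t then (-1 : F) else 0 := by
    intro t
    by_cases hdvd : n ∣ t
    · have h1 : α ^ t = 1 := orderOf_dvd_iff_pow_eq_one.mp (by rw [hα]; exact hdvd)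
      simp [h1, hnF, hdvd]
    · have hne : α ^ t ≠ 1 := by
        intro h
        exact hdvd (by rw [← hα]; exact orderOf_dvd_of_pow_eq_one h)
      rw [geom_sum_eq hne]
      have hpn : (α ^ t) ^ n = 1 := by
        rw [← pow_mul, mul_comm, pow_mul, hα1, one_pow]
      simp [hpn, hdvd]
  set v : F[X] := ∑ j ∈ range n, C (u.eval (α ^ j)) * X ^ j with hv
  -- evaluation of v at α^i
  have heval : ∀ i : ℕ, 1 ≤ i → i ≤ n - 1 → v.eval (α ^ i) = - u.coeff (n - i) := by
    intro i hi1 hi2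
    have hud : u.natDegree < n := by omega
    have e1 : v.eval (α ^ i) = ∑ j ∈ range n, u.eval (α ^ j) * (α ^ i) ^ j := by
      simp [hv, eval_finset_sum]
    rw [e1]
    have e2 : ∀ j, u.eval (α ^ j) = ∑ m ∈ range n, u.coeff m * (α ^ j) ^ m := by
      intro j
      exact Polynomial.eval_eq_sum_range' hud _
    calc ∑ j ∈ range n, u.eval (α ^ j) * (α ^ i) ^ j
        = ∑ j ∈ range n, ∑ m ∈ range n, u.coeff m * (α ^ (m + i)) ^ j := by
          refine sum_congr rfl fun j _ => ?_
          rw [e2, Finset.sum_mul]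
          refine sum_congr rfl fun m _ => ?_
          rw [mul_assoc]
          congr 1
          rw [← pow_mul, ← pow_mul, ← pow_add, ← pow_mul]
          congr 1
          ring
      _ = ∑ m ∈ range n, u.coeff m * ∑ j ∈ range n, (α ^ (m + i)) ^ j := by
          rw [Finset.sum_comm]
          simp [Finset.mul_sum]
      _ = ∑ m ∈ range n, u.coeff m * (if n ∣ (m + i) then (-1 : F) else 0) := by
          refine sum_congr rfl fun m _ => ?_
          rw [hgeom]
      _ = - u.coeff (n - i) := by
          have hzero : ∀ m ∈ range n, m ≠ n - i →
              u.coeff m * (if n ∣ (m + i) then (-1 : F) else 0) = 0 := by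
            intro m hm hne
            have hmlt : m < n := mem_range.mp hm
            have hnd : ¬ n ∣ (m + i) := by
              intro hdd
              have h1 : 0 < m + i := by omega
              have h2 := Nat.le_of_dvd h1 hdd
              have h3 : n ∣ (m + i - n) := Nat.dvd_sub hdd dvd_rfl
              have h4 : m + i - n < n := by omega
              have h5 := Nat.eq_zero_of_dvd_of_lt h3 h4
              omega
            rw [if_neg hnd, mul_zero]
          rw [Finset.sum_eq_single_of_mem (n - i) (mem_range.mpr (by omega)) hzero]
          have hd1 : n ∣ (n - i + i) := by
            rw [Nat.sub_add_cancel (by omega)]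
          rw [if_pos hd1]
          ring
  -- v(α) ≠ 0
  have hv1 : v.eval α = - u.coeff (q - 2) := by
    have := heval 1 le_rfl (by omega)
    rw [pow_one] at this
    rw [this, show n - 1 = q - 2 by omega]
  have hv0 : v.eval α ≠ 0 := by
    rw [hv1]
    exact neg_ne_zero.mpr hutop
  -- distinct powers
  have hpowinj : ∀ i j : ℕ, i < j → j - i < n → α ^ i ≠ α ^ j := by
    intro i j hij hlt he
    have h1 : α ^ i * α ^ (j - i) = α ^ i * 1 := by
      rw [mul_one, ← pow_add, Nat.add_sub_cancel' hij.le]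
      exact he.symm
    have h2 : α ^ (j - i) = 1 := mul_left_cancel₀ (pow_ne_zero _ hα0) h1
    have h3 : n ∣ j - i := by rw [← hα]; exact orderOf_dvd_of_pow_eq_one h2
    have := Nat.le_of_dvd (by omega) h3
    omega
  -- g₁ divides v
  have hd2 : 2 ≤ d := by omega
  have hdq : d ≤ q - 2 := by omega
  have hdvd : g₁ ∣ v := by
    rw [hg1]
    apply Finset.prod_dvd_of_coprime
    · intro i hi j hj hij
      simp only [Finset.coe_Icc, Set.mem_Icc] at hi hj
      have hne : α ^ i ≠ α ^ j := by
        rcases lt_or_gt_of_ne hij with h | h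
        · exact hpowinj i j h (by omega)
        · exact (hpowinj j i h (by omega)).symm
      exact Polynomial.isCoprime_X_sub_C_of_isUnit_sub
        (isUnit_iff_ne_zero.mpr (sub_ne_zero.mpr hne))
    · intro i hi
      rw [Finset.mem_Icc] at hi
      rw [dvd_iff_isRoot]
      have := heval i (by omega) (by omega)
      rw [IsRoot, this, humid (n - i) (by omega) (by omega), neg_zero]
  obtain ⟨h, hh⟩ := hdvd
  have hg1monic : g₁.Monic := by
    rw [hg1]
    exact monic_prod_of_monic _ _ fun i _ => monic_X_sub_C _
  have hg1deg : g₁.natDegree = d - 2 := by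
    rw [hg1, natDegree_prod _ _ (fun i _ => X_sub_C_ne_zero _)]
    rw [Finset.sum_congr rfl (fun i _ => natDegree_X_sub_C (α ^ i)), Finset.sum_const,
      smul_eq_mul, mul_one, Nat.card_Icc]
    omega
  have hhne : h ≠ 0 := by
    intro h0
    rw [h0, mul_zero] at hh
    rw [hh] at hv0
    simp at hv0
  have hvdeg : v.natDegree ≤ n - 1 := by
    apply natDegree_sum_le_of_forall_le
    intro j hj
    refine (natDegree_C_mul_le _ _).trans ?_
    rw [natDegree_X_pow]
    have := mem_range.mp hj
    omega
  have hhdeg : h.natDegree ≤ k := by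
    have hmul : v.natDegree = g₁.natDegree + h.natDegree := by
      rw [hh, natDegree_mul hg1monic.ne_zero hhne]
    omega
  set l := h /ₘ (X - C α) with hl
  set a := h.eval α with ha
  have hmod : C a + (X - C α) * l = h := by
    have := modByMonic_add_div h (X - C α)
    rwa [modByMonic_X_sub_C_eq_C_eval] at this
  have hldeg : l.natDegree ≤ k - 1 := by
    have := natDegree_divByMonic h (monic_X_sub_C α)
    rw [natDegree_X_sub_C] at this
    rw [hl, this]
    omega
  have hane : a ≠ 0 := by
    intro h0
    apply hv0
    rw [hh, eval_mul]
    rw [ha] at h0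
    rw [h0, mul_zero]
  have hIcc : Finset.Icc 1 (d - 1) = insert 1 (Finset.Icc 2 (d - 1)) := by
    ext x
    simp only [Finset.mem_Icc, Finset.mem_insert]
    omega
  have hgfact : g = (X - C α) * g₁ := by
    rw [hg, hg1, hIcc, Finset.prod_insert (by simp)]
    simp
  refine ⟨a, hane, l, hldeg, ?_⟩
  rw [hgfact]
  calc C a * g₁ + l * ((X - C α) * g₁) = (C a + (X - C α) * l) * g₁ := by ring
    _ = h * g₁ := by rw [hmod]
    _ = v := by rw [hh, mul_comm]
end

section
/- Let q ≥ 4 be a prime power and 2 ≤ k ≤ q-2. Let α be a primitive element of F_q. If u ∈ F_q^{q-1} has Lagrange interpolation polynomial u(x) = a x^{q-2} + f(x), where a ∈ F_q^* and deg f ≤ k-1, then u is a deep hole of the standard Reed–Solomon code C_q(F_q^*, k), i.e., d(u, C) = q-1-k. -/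
open Polynomial Finset

/-- Words with interpolation polynomial a·x^{q-2} + f(x), deg f ≤ k-1, a ≠ 0,
are deep holes of the standard Reed-Solomon code: d(u, C) = q-1-k. -/
theorem deep_hole_top_monomial {F : Type*} [Field F] [Fintype F] [DecidableEq F]
    (hq : 4 ≤ Fintype.card F)
    (k : ℕ) (hk1 : 2 ≤ k) (hk2 : k ≤ Fintype.card F - 2)
    (α : F) (hα : orderOf α = Fintype.card F - 1)
    (a : F) (ha : a ≠ 0) (f : F[X]) (hf : f.natDegree ≤ k - 1)
    (u : Fin (Fintype.card F - 1) → F)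
    (hu : ∀ i, u i = (C a * X ^ (Fintype.card F - 2) + f).eval (α ^ i.val)) :
    IsLeast {n : ℕ | ∃ h : F[X], h.natDegree ≤ k - 1 ∧
        n = hammingDist u (fun i : Fin (Fintype.card F - 1) => h.eval (α ^ i.val))}
      (Fintype.card F - 1 - k) := by
  have hα0 : α ≠ 0 := by
    intro hc
    have h1 := pow_orderOf_eq_one α
    rw [hα, hc, zero_pow (by omega : Fintype.card F - 1 ≠ 0)] at h1
    exact zero_ne_one h1
  have hinj : ∀ m n : ℕ, m < Fintype.card F - 1 → n < Fintype.card F - 1 →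
      α ^ m = α ^ n → m = n := by
    intro m n hm hn hmn
    exact pow_injOn_Iio_orderOf (by rwa [Set.mem_Iio, hα]) (by rwa [Set.mem_Iio, hα]) hmn
  have hx1 : ∀ i : Fin (Fintype.card F - 1), (α ^ i.val) ^ (Fintype.card F - 1) = 1 := by
    intro i
    rw [pow_right_comm]
    have h1 : α ^ (Fintype.card F - 1) = 1 := by rw [← hα]; exact pow_orderOf_eq_one α
    rw [h1, one_pow]
  have key : ∀ (g : F[X]) (i : Fin (Fintype.card F - 1)),
      (a * (α ^ i.val) ^ (Fintype.card F - 2) + g.eval (α ^ i.val) = 0 ↔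
        (C a + X * g).eval (α ^ i.val) = 0) := by
    intro g i
    set x := α ^ i.val with hxdef
    have hxne : x ≠ 0 := pow_ne_zero _ hα0
    have hxx : x * x ^ (Fintype.card F - 2) = 1 := by
      rw [← pow_succ']
      rw [show Fintype.card F - 2 + 1 = Fintype.card F - 1 by omega]
      exact hx1 i
    have heq : (C a + X * g).eval x = x * (a * x ^ (Fintype.card F - 2) + g.eval x) := by
      simp only [eval_add, eval_C, eval_mul, eval_X]
      rw [mul_add, ← mul_assoc, mul_comm x a, mul_assoc, hxx, mul_one]
    rw [heq, mul_eq_zero]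
    exact (or_iff_right hxne).symm
  have agree : ∀ (h : F[X]) (i : Fin (Fintype.card F - 1)),
      (u i = h.eval (α ^ i.val)) ↔ (C a + X * (f - h)).eval (α ^ i.val) = 0 := by
    intro h i
    rw [hu i, ← key (f - h) i]
    simp only [eval_add, eval_mul, eval_C, eval_pow, eval_X, eval_sub]
    rw [← add_sub_assoc, sub_eq_zero]
  have hdist : ∀ h : F[X], hammingDist u (fun i : Fin (Fintype.card F - 1) => h.eval (α ^ i.val)) =
      (Fintype.card F - 1) -
        #{i : Fin (Fintype.card F - 1) | (C a + X * (f - h)).eval (α ^ i.val) = 0} := by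
    intro h
    have hsplit := Finset.card_filter_add_card_filter_not
      (s := (univ : Finset (Fin (Fintype.card F - 1))))
      (p := fun i => u i = h.eval (α ^ i.val))
    rw [Finset.card_univ, Fintype.card_fin] at hsplit
    have h1 : #{i : Fin (Fintype.card F - 1) | u i = h.eval (α ^ i.val)} =
        #{i : Fin (Fintype.card F - 1) | (C a + X * (f - h)).eval (α ^ i.val) = 0} := by
      congr 1
      apply Finset.filter_congr
      intro i _
      simp only [agree h i]
    unfold hammingDist
    simp only [ne_eq]
    omega
  constructor
  · -- membership
    set p : F[X] := C a * ∏ j ∈ Finset.range k, (1 - C ((α ^ j)⁻¹) * X) with hpdef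
    have hpc : p.coeff 0 = a := by
      rw [coeff_zero_eq_eval_zero]
      simp [hpdef, eval_prod]
    have hpdeg : p.natDegree ≤ k := by
      refine le_trans (natDegree_mul_le) ?_
      rw [natDegree_C, zero_add]
      refine le_trans (natDegree_prod_le _ _) ?_
      calc ∑ j ∈ Finset.range k, (1 - C ((α ^ j)⁻¹) * X).natDegree
          ≤ ∑ _j ∈ Finset.range k, 1 := by
            apply Finset.sum_le_sum
            intro j _
            refine le_trans (natDegree_sub_le _ _) ?_
            simp only [natDegree_one, max_le_iff]
            exact ⟨by omega, le_trans (natDegree_mul_le) (by simp)⟩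
        _ = k := by simp
    set w : F[X] := p.divX with hwdef
    have hw : X * w + C a = p := by rw [hwdef, ← hpc]; exact X_mul_divX_add p
    have hwdeg : w.natDegree ≤ k - 1 := by
      rw [hwdef, natDegree_divX_eq_natDegree_tsub_one]
      omega
    refine ⟨f - w, le_trans (natDegree_sub_le _ _)
      (by omega : max f.natDegree w.natDegree ≤ k - 1), ?_⟩
    have hfw : f - (f - w) = w := by ring
    rw [hdist (f - w), hfw]
    have hpform : C a + X * w = p := by rw [← hw]; ring
    rw [hpform]
    have hroots : ∀ i : Fin (Fintype.card F - 1), p.eval (α ^ i.val) = 0 ↔ i.val < k := by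
      intro i
      rw [hpdef]
      simp only [eval_mul, eval_C, eval_prod, eval_sub, eval_one, eval_X, mul_eq_zero]
      rw [or_iff_right ha, Finset.prod_eq_zero_iff]
      constructor
      · rintro ⟨j, hj, hj0⟩
        rw [Finset.mem_range] at hj
        have hj1 : (α ^ j)⁻¹ * α ^ i.val = 1 := (sub_eq_zero.mp hj0).symm
        have hxj : α ^ j = α ^ i.val :=
          (inv_mul_eq_one₀ (pow_ne_zero _ hα0)).mp hj1
        have := hinj j i.val (by omega) i.isLt hxj
        omega
      · intro hik
        refine ⟨i.val, Finset.mem_range.mpr hik, ?_⟩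
        rw [inv_mul_cancel₀ (pow_ne_zero _ hα0)]
        ring
    have hcount : #{i : Fin (Fintype.card F - 1) | p.eval (α ^ i.val) = 0} = k := by
      have hset : Finset.filter (fun i : Fin (Fintype.card F - 1) => p.eval (α ^ i.val) = 0)
            Finset.univ = Finset.filter (fun i => i.val < k) Finset.univ :=
        Finset.filter_congr (fun i _ => by simp [hroots i])
      rw [hset, ← Finset.card_range k]
      apply Finset.card_bij (fun i _ => i.val)
      · intro i hi; simp at hi ⊢; exact hi
      · intro i hi j hj hij; exact Fin.ext hij
      · intro j hj
        simp only [Finset.mem_range] at hj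
        exact ⟨⟨j, by omega⟩, by simp [hj], rfl⟩
    rw [hcount]
  · -- lower bound
    rintro n ⟨h, hdeg, rfl⟩
    set p : F[X] := C a + X * (f - h) with hpdef
    have hp0 : p ≠ 0 := by
      intro hc
      apply ha
      have := congrArg (eval 0) hc
      simpa [hpdef] using this
    have hpdeg : p.natDegree ≤ k := by
      refine le_trans (natDegree_add_le _ _) ?_
      rw [natDegree_C]
      simp only [max_le_iff]
      refine ⟨by omega, ?_⟩
      refine le_trans natDegree_mul_le ?_
      rw [natDegree_X]
      have := natDegree_sub_le f h
      omega
    have hS : #{i : Fin (Fintype.card F - 1) | p.eval (α ^ i.val) = 0} ≤ k := by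
      have hmaps : ∀ i ∈ ({i : Fin (Fintype.card F - 1) | p.eval (α ^ i.val) = 0} : Finset _),
          α ^ i.val ∈ p.roots.toFinset := by
        intro i hi
        simp only [Finset.mem_filter] at hi
        rw [Multiset.mem_toFinset, mem_roots hp0]
        exact hi.2
      have hc := Finset.card_le_card_of_injOn (fun i => α ^ i.val) (fun i hi => hmaps i hi)
        (fun i _ j _ hij => Fin.ext (hinj i.val j.val i.isLt j.isLt hij))
      refine le_trans hc (le_trans ?_ hpdeg)
      exact le_trans (Multiset.toFinset_card_le _) (Polynomial.card_roots' p)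
    rw [hdist h, ← hpdef]
    omega
end

section
/- Let q ≥ 4 be a prime power and 2 ≤ k ≤ q-2. Let α be a primitive element of F_q. If u ∈ F_q^{q-1} has Lagrange interpolation polynomial u(x) = a x^k + f(x), where a ∈ F_q^* and deg f ≤ k-1, then u is a deep hole of the standard Reed–Solomon code C_q(F_q^*, k), i.e., d(u, C) = q-1-k. -/
open Polynomial Finset

/-- Words with interpolation polynomial a·x^k + f(x), deg f ≤ k-1, a ≠ 0,
are deep holes of the standard Reed-Solomon code: d(u, C) = q-1-k. -/
theorem deep_hole_k_monomial {F : Type*} [Field F] [Fintype F] [DecidableEq F]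
    (hq : 4 ≤ Fintype.card F)
    (k : ℕ) (hk1 : 2 ≤ k) (hk2 : k ≤ Fintype.card F - 2)
    (α : F) (hα : orderOf α = Fintype.card F - 1)
    (a : F) (ha : a ≠ 0) (f : F[X]) (hf : f.natDegree ≤ k - 1)
    (u : Fin (Fintype.card F - 1) → F)
    (hu : ∀ i, u i = (C a * X ^ k + f).eval (α ^ i.val)) :
    IsLeast {n : ℕ | ∃ h : F[X], h.natDegree ≤ k - 1 ∧
        n = hammingDist u (fun i : Fin (Fintype.card F - 1) => h.eval (α ^ i.val))}
      (Fintype.card F - 1 - k) := by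
  have hkn : k < Fintype.card F - 1 := by omega
  have hα0 : α ≠ 0 := by
    intro h0
    have h1 : α ^ (Fintype.card F - 1) = 1 := by
      rw [← hα]; exact pow_orderOf_eq_one α
    rw [h0, zero_pow (by omega : Fintype.card F - 1 ≠ 0)] at h1
    exact zero_ne_one h1
  -- injectivity of powers below q-1
  have hpow_inj : ∀ i j : ℕ, i < Fintype.card F - 1 → j < Fintype.card F - 1 →
      α ^ i = α ^ j → i = j := by
    have key : ∀ i j : ℕ, i < Fintype.card F - 1 → j < Fintype.card F - 1 →
        i < j → α ^ i = α ^ j → False := by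
      intro i j hi hj hij hij2
      have h1 : α ^ i * α ^ (j - i) = α ^ i * 1 := by
        rw [mul_one, ← pow_add]
        rw [hij2]
        congr 1
        omega
      have h2 : α ^ (j - i) = 1 := mul_left_cancel₀ (pow_ne_zero _ hα0) h1
      have h3 := orderOf_dvd_of_pow_eq_one h2
      rw [hα] at h3
      have := Nat.le_of_dvd (by omega) h3
      omega
    intro i j hi hj hij
    rcases lt_trichotomy i j with h | h | h
    · exact absurd hij (fun hh => key i j hi hj h hh)
    · exact h
    · exact absurd hij.symm (fun hh => key j i hj hi h hh)
  -- hamming distance as a filter count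
  have hdist : ∀ h : F[X],
      hammingDist u (fun i : Fin (Fintype.card F - 1) => h.eval (α ^ i.val)) =
      #{i : Fin (Fintype.card F - 1) | (C a * X ^ k + f - h).eval (α ^ i.val) ≠ 0} := by
    intro h
    unfold hammingDist
    congr 1
    ext i
    simp only [Finset.mem_filter, Finset.mem_univ, true_and, hu i, eval_sub]
    constructor
    · intro hne
      exact sub_ne_zero_of_ne hne
    · intro hne
      exact sub_ne_zero.mp hne
  constructor
  · -- membership: exhibit h achieving distance (q-1) - k
    refine ⟨C a * X ^ k + f - C a * ∏ j ∈ range k, (X - C (α ^ j)), ?_, ?_⟩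
    · -- degree bound
      have hmonic : (∏ j ∈ range k, (X - C (α ^ j))).Monic :=
        monic_prod_of_monic _ _ (fun j _ => monic_X_sub_C _)
      have hdeg : (∏ j ∈ range k, (X - C (α ^ j))).natDegree = k := by
        rw [natDegree_prod _ _ (fun j _ => X_sub_C_ne_zero _)]
        have h1 : ∀ j ∈ range k, (X - C (α ^ j)).natDegree = 1 :=
          fun j _ => natDegree_X_sub_C _
        rw [Finset.sum_congr rfl h1, Finset.sum_const, Finset.card_range, smul_eq_mul, mul_one]
      have hsub : (X ^ k - ∏ j ∈ range k, (X - C (α ^ j))).degree < (k : WithBot ℕ) := by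
        have h2 := degree_sub_lt (p := (X : F[X]) ^ k) (q := ∏ j ∈ range k, (X - C (α ^ j)))
          (by rw [degree_X_pow, degree_eq_natDegree hmonic.ne_zero, hdeg])
          (pow_ne_zero _ X_ne_zero)
          (by rw [leadingCoeff_X_pow, hmonic.leadingCoeff])
        rwa [degree_X_pow] at h2
      have hsub' : (X ^ k - ∏ j ∈ range k, (X - C (α ^ j))).natDegree ≤ k - 1 := by
        by_cases h0 : (X ^ k - ∏ j ∈ range k, (X - C (α ^ j))) = 0
        · rw [h0, natDegree_zero]; omega
        · have hlt : (X ^ k - ∏ j ∈ range k, (X - C (α ^ j))).natDegree < k :=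
            (natDegree_lt_iff_degree_lt h0).mpr (by exact_mod_cast hsub)
          omega
      have heq : C a * X ^ k + f - C a * ∏ j ∈ range k, (X - C (α ^ j)) =
          C a * (X ^ k - ∏ j ∈ range k, (X - C (α ^ j))) + f := by ring
      rw [heq]
      exact natDegree_add_le_of_degree_le ((natDegree_C_mul_le _ _).trans hsub') hf
    · -- distance equals (q-1) - k
      rw [hdist]
      have hsimp : (C a * X ^ k + f - (C a * X ^ k + f - C a * ∏ j ∈ range k, (X - C (α ^ j)))) =
          C a * ∏ j ∈ range k, (X - C (α ^ j)) := by ring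
      rw [hsimp]
      have hfilter : ({i : Fin (Fintype.card F - 1) |
            (C a * ∏ j ∈ range k, (X - C (α ^ j))).eval (α ^ i.val) ≠ 0} :
            Finset (Fin (Fintype.card F - 1))) =
          ({i : Fin (Fintype.card F - 1) | i.val < k} :
            Finset (Fin (Fintype.card F - 1)))ᶜ := by
        ext i
        simp only [Finset.mem_filter, Finset.mem_univ, true_and, Finset.mem_compl,
          eval_mul, eval_prod, eval_sub, eval_X, eval_C, mul_ne_zero_iff,
          Finset.prod_ne_zero_iff, ha, true_and]
        constructor
        · rintro ⟨-, hprod⟩ hik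
          exact hprod i.val (Finset.mem_range.mpr hik) (sub_self _)
        · intro hik
          refine ⟨ha, fun j hj => ?_⟩
          rw [sub_ne_zero]
          intro heq
          have hji := hpow_inj i.val j i.isLt (by have := Finset.mem_range.mp hj; omega) heq
          have hjk := Finset.mem_range.mp hj
          exact hik (by omega : i.val < k)
      rw [hfilter]
      have hcard : #({i : Fin (Fintype.card F - 1) | i.val < k} :
          Finset (Fin (Fintype.card F - 1))) = k := by
        apply Finset.card_eq_of_bijective (f := fun j hj => (⟨j, lt_trans hj hkn⟩ :
          Fin (Fintype.card F - 1)))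
        · intro i hi
          simp only [Finset.mem_filter, Finset.mem_univ, true_and] at hi
          exact ⟨i.val, hi, rfl⟩
        · intro j hj
          simp [hj]
        · intro i j hi hj hij
          exact Fin.mk.inj_iff.mp hij
      rw [Finset.card_compl, hcard]
      simp
  · -- lower bound
    rintro m ⟨h, hh, rfl⟩
    rw [hdist]
    set g : F[X] := C a * X ^ k + f - h with hgdef
    have hdegg : g.natDegree = k := by
      have h1 : (C a * X ^ k).natDegree = k := by
        rw [natDegree_C_mul ha, natDegree_X_pow]
      have h2 : (f - h).natDegree < (C a * X ^ k).natDegree := by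
        rw [h1]
        have h3 : (f - h).natDegree ≤ k - 1 := (natDegree_sub_le f h).trans (max_le hf hh)
        omega
      have h4 : g = C a * X ^ k + (f - h) := by rw [hgdef]; ring
      rw [h4, natDegree_add_eq_left_of_natDegree_lt h2, h1]
    have hg0 : g ≠ 0 := by
      intro h0
      rw [h0, natDegree_zero] at hdegg
      omega
    -- at most k of the evaluation points are roots
    have hroots : #({i : Fin (Fintype.card F - 1) | g.eval (α ^ i.val) = 0} :
        Finset (Fin (Fintype.card F - 1))) ≤ k := by
      have hinj : Set.InjOn (fun i : Fin (Fintype.card F - 1) => α ^ i.val)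
          ({i : Fin (Fintype.card F - 1) | g.eval (α ^ i.val) = 0} :
            Finset (Fin (Fintype.card F - 1))) := by
        intro i _ j _ hij
        exact Fin.ext (hpow_inj i.val j.val i.isLt j.isLt hij)
      have hmaps : ∀ i ∈ ({i : Fin (Fintype.card F - 1) | g.eval (α ^ i.val) = 0} :
          Finset (Fin (Fintype.card F - 1))),
          (fun i : Fin (Fintype.card F - 1) => α ^ i.val) i ∈ g.roots.toFinset := by
        intro i hi
        simp only [Finset.mem_filter, Finset.mem_univ, true_and] at hi
        rw [Multiset.mem_toFinset, mem_roots hg0]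
        exact hi
      calc #({i : Fin (Fintype.card F - 1) | g.eval (α ^ i.val) = 0} :
            Finset (Fin (Fintype.card F - 1)))
          ≤ #g.roots.toFinset := Finset.card_le_card_of_injOn _ hmaps hinj
        _ ≤ Multiset.card g.roots := Multiset.toFinset_card_le _
        _ ≤ g.natDegree := card_roots' _
        _ = k := hdegg
    have hsplit := Finset.card_filter_add_card_filter_not
      (s := (Finset.univ : Finset (Fin (Fintype.card F - 1))))
      (p := fun i => g.eval (α ^ i.val) = 0)
    simp only [Finset.card_univ, Fintype.card_fin] at hsplit
    have hconv : #(Finset.filter (fun i : Fin (Fintype.card F - 1) =>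
        ¬ g.eval (α ^ i.val) = 0) Finset.univ) =
        #({i : Fin (Fintype.card F - 1) | g.eval (α ^ i.val) ≠ 0} :
          Finset (Fin (Fintype.card F - 1))) := rfl
    omega
end

section
/- Let u ∈ F_q^n be a received word for the generalized Reed–Solomon code C = C_q(D,k) with evaluation set D of size n. If the Lagrange interpolation polynomial of u has degree exactly k, then d(u, C) = n - k, i.e., u is a deep hole. -/
open Polynomial Finset

/-- A word whose interpolation polynomial has degree exactly k is a deep hole:
d(u, C) = n - k. -/
theorem deep_hole_degree_k {F : Type*} [Field F] [DecidableEq F]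
    (D : Finset F) (k : ℕ) (hk1 : 1 ≤ k) (hkn : k < D.card)
    (u : {x // x ∈ D} → F) (p : F[X])
    (hpdeg : p.natDegree ≤ D.card - 1)
    (hinterp : ∀ x : {x // x ∈ D}, p.eval x.val = u x)
    (hdeg : p.natDegree = k) :
    IsLeast {n : ℕ | ∃ f : F[X], f.natDegree ≤ k - 1 ∧
        n = hammingDist u (fun x : {x // x ∈ D} => f.eval x.val)}
      (D.card - k) := by
  have hp0 : p ≠ 0 := fun h => by simp [h] at hdeg; omega
  have hc : p.leadingCoeff ≠ 0 := leadingCoeff_ne_zero.2 hp0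
  constructor
  · -- membership
    obtain ⟨S, hSD, hScard⟩ := Finset.exists_subset_card_eq hkn.le
    set g : F[X] := C p.leadingCoeff * ∏ x ∈ S, (X - C x) with hg
    have hmon : (∏ x ∈ S, (X - C x)).Monic := monic_prod_of_monic _ _ fun x _ => monic_X_sub_C x
    have hprodd : (∏ x ∈ S, (X - C x)).natDegree = k := by
      rw [natDegree_prod _ _ (fun x _ => X_sub_C_ne_zero x)]
      simp [hScard]
    have hgdeg : g.natDegree = k := by
      rw [hg, natDegree_C_mul hc, hprodd]
    have hglc : g.leadingCoeff = p.leadingCoeff := by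
      rw [hg, leadingCoeff_mul, leadingCoeff_C, hmon.leadingCoeff, mul_one]
    have hg0 : g ≠ 0 := fun h => by rw [h] at hgdeg; simp at hgdeg; omega
    have hsub : (p - g).natDegree ≤ k - 1 := by
      by_cases hpg : p - g = 0
      · rw [hpg]; simp
      · have hlt : (p - g).degree < p.degree :=
          degree_sub_lt (by rw [degree_eq_natDegree hp0, degree_eq_natDegree hg0, hgdeg, hdeg])
            hp0 hglc.symm
        have := (natDegree_lt_natDegree_iff hpg).2 hlt
        omega
    refine ⟨p - g, hsub, ?_⟩
    have key : ∀ x : {x // x ∈ D}, (u x ≠ (p - g).eval x.val) ↔ x.val ∉ S := by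
      intro x
      rw [← hinterp x, eval_sub, ne_eq, eq_comm, sub_eq_self, hg]
      simp [eval_prod, Finset.prod_eq_zero_iff, sub_eq_zero, hc, eq_comm]
    rw [hammingDist]
    rw [show ({x : {x // x ∈ D} | u x ≠ (p - g).eval x.val} : Finset _)
        = univ.filter (fun x : {x // x ∈ D} => x.val ∉ S) from by
      ext x; simpa [eval_sub] using key x]
    rw [Finset.univ_eq_attach, Finset.filter_attach (fun a => a ∉ S) D, Finset.card_map,
      Finset.card_attach, Finset.filter_not, Finset.card_sdiff_of_subset (Finset.filter_subset _ _),
      Finset.filter_mem_eq_inter, Finset.inter_eq_right.2 hSD, hScard]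
  · rintro n ⟨f, hf, rfl⟩
    set q := p - f with hq
    have hqdeg : q.natDegree = k := by
      rw [hq]
      have : f.natDegree < p.natDegree := by omega
      rw [natDegree_sub_eq_left_of_natDegree_lt this, hdeg]
    have hq0 : q ≠ 0 := fun h => by rw [h] at hqdeg; simp at hqdeg; omega
    -- agreement set
    set A := univ.filter (fun x : {x // x ∈ D} => ¬ u x ≠ f.eval x.val) with hA
    have hcard : hammingDist u (fun x : {x // x ∈ D} => f.eval x.val) + A.card = D.card := by
      rw [hammingDist, hA]
      have := Finset.card_filter_add_card_filter_not (s := (univ : Finset {x // x ∈ D}))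
        (p := fun x : {x // x ∈ D} => u x ≠ f.eval x.val)
      simpa [Fintype.card_coe] using this
    have hAk : A.card ≤ k := by
      have hsub : A.image Subtype.val ⊆ q.roots.toFinset := by
        intro x hx
        simp only [Finset.mem_image] at hx
        obtain ⟨y, hy, rfl⟩ := hx
        rw [hA, Finset.mem_filter, not_ne_iff] at hy
        rw [Multiset.mem_toFinset, mem_roots hq0]
        exact by rw [IsRoot, hq, eval_sub, hinterp y, hy.2, sub_self]
      calc A.card = (A.image Subtype.val).card :=
            (Finset.card_image_of_injective _ Subtype.val_injective).symm
        _ ≤ q.roots.toFinset.card := Finset.card_le_card hsub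
        _ ≤ Multiset.card q.roots := Multiset.toFinset_card_le _
        _ ≤ q.natDegree := card_roots' q
        _ = k := hqdeg
    omega
end

section
/- Let α be a primitive element of F_q, 2 ≤ k ≤ q-2, d = q-k, g(x) = Π_{i=1}^{d-1}(x-α^i), g_2(x) = g(x)/(x-α^{d-1}). Then there exist a ∈ F_q^* and l(x) ∈ F_q[x] with deg l ≤ k-1 such that a·g_2(x) + l(x)g(x) equals the DFT of x^k, i.e., equals Σ_{j=0}^{q-2} α^{kj} x^j. -/
open Polynomial Finset

/-- The DFT of x^k is of the form a·g₂ + l·g. -/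
theorem dft_xk {F : Type*} [Field F] [Fintype F]
    (α : F) (hα : orderOf α = Fintype.card F - 1)
    (k d : ℕ) (hk1 : 2 ≤ k) (hk2 : k ≤ Fintype.card F - 2)
    (hd : d = Fintype.card F - k)
    (g : F[X]) (hg : g = ∏ i ∈ Finset.Icc 1 (d - 1), (X - C (α ^ i)))
    (g₂ : F[X]) (hg2 : g₂ = ∏ i ∈ Finset.Icc 1 (d - 2), (X - C (α ^ i)))
    : ∃ a : F, a ≠ 0 ∧ ∃ l : F[X], l.natDegree ≤ k - 1 ∧
      C a * g₂ + l * g =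
        ∑ j ∈ Finset.range (Fintype.card F - 1), C (α ^ (k * j)) * X ^ j := by
  classical
  set q := Fintype.card F with hq
  have hq4 : 4 ≤ q := by omega
  have hd2 : 2 ≤ d := by omega
  have hdq : d ≤ q - 2 := by omega
  have hαq : α ^ (q - 1) = 1 := by rw [← hα]; exact pow_orderOf_eq_one α
  have hα0 : α ≠ 0 := by
    intro h
    rw [h, zero_pow (by omega : q - 1 ≠ 0)] at hαq
    exact zero_ne_one hαq
  have hinj : ∀ i j : ℕ, i < q - 1 → j < q - 1 → α ^ i = α ^ j → i = j := by
    intro i j hi hj hij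
    exact pow_injOn_Iio_orderOf (by rw [hα]; exact hi) (by rw [hα]; exact hj) hij
  set β := α ^ k with hβ
  set c := α ^ (d - 1) with hc
  have hβc : β * c = 1 := by
    rw [hβ, hc, ← pow_add]
    have : k + (d - 1) = q - 1 := by omega
    rw [this, hαq]
  have hβq : β ^ (q - 1) = 1 := by
    rw [hβ, ← pow_mul, mul_comm, pow_mul, hαq, one_pow]
  -- primitive root and factorization of X^(q-1) - 1
  have hprim : IsPrimitiveRoot α (q - 1) := hα ▸ IsPrimitiveRoot.orderOf α
  have himg : (Finset.range (q - 1)).image (α ^ ·) = nthRootsFinset (q - 1) (1 : F) := by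
    apply Finset.eq_of_subset_of_card_le
    · intro x hx
      simp only [Finset.mem_image, Finset.mem_range] at hx
      obtain ⟨i, hi, rfl⟩ := hx
      rw [mem_nthRootsFinset (by omega : 0 < q - 1)]
      rw [← pow_mul, mul_comm, pow_mul, hαq, one_pow]
    · rw [hprim.card_nthRootsFinset, Finset.card_image_of_injOn, Finset.card_range]
      intro i hi j hj hij
      exact hinj i j (Finset.mem_range.mp hi) (Finset.mem_range.mp hj) hij
  have hfact : X ^ (q - 1) - 1 = ∏ i ∈ Finset.range (q - 1), (X - C (α ^ i)) := by
    rw [X_pow_sub_one_eq_prod (by omega : 0 < q - 1) hprim, ← himg,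
      Finset.prod_image]
    intro i hi j hj hij
    exact hinj i j (Finset.mem_range.mp hi) (Finset.mem_range.mp hj) hij
  -- splitting the product
  set h : F[X] := ∏ i ∈ Finset.Ioc (d - 1) (q - 2), (X - C (α ^ i)) with hh
  have hIcc1 : ∀ n : ℕ, Finset.Icc 1 n = Finset.Ioc 0 n := fun n => by
    ext x; simp; omega
  have hgg2 : g = g₂ * (X - C c) := by
    rw [hg, hg2, hIcc1, hIcc1]
    have hde : d - 1 = (d - 2) + 1 := by omega
    rw [hde, Finset.prod_Ioc_succ_top (by omega : 0 ≤ d - 2)]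
    rw [hc, hde]
  have hsplit : ∏ i ∈ Finset.range (q - 1), (X - C (α ^ i)) =
      (X - C 1) * ((g₂ * (X - C c)) * h) := by
    have hr : Finset.range (q - 1) = insert 0 (Finset.Ioc 0 (q - 2)) := by
      ext x; simp; omega
    rw [hr, Finset.prod_insert (by simp), pow_zero]
    congr 1
    rw [← Finset.prod_Ioc_consecutive (fun i => X - C (α ^ i))
      (by omega : 0 ≤ d - 1) (by omega : d - 1 ≤ q - 2), ← hh]
    congr 1
    rw [hg2, hIcc1]
    have hde : d - 1 = (d - 2) + 1 := by omega
    rw [hde, Finset.prod_Ioc_succ_top (by omega : 0 ≤ d - 2), hc, hde]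
  -- geometric sum
  set S : F[X] := ∑ j ∈ Finset.range (q - 1), C (α ^ (k * j)) * X ^ j with hS
  have hSgeom : S * (C β * X - 1) = X ^ (q - 1) - 1 := by
    have hS' : S = ∑ j ∈ Finset.range (q - 1), (C β * X) ^ j := by
      rw [hS]
      refine Finset.sum_congr rfl fun j _ => ?_
      rw [mul_pow, ← C_pow, hβ, ← pow_mul]
    rw [hS', geom_sum_mul, mul_pow, ← C_pow, hβq, C_1, one_mul]
  have hCβ : C β * X - 1 = C β * (X - C c) := by
    rw [mul_sub, ← C_mul, hβc, C_1]
  have hXc : (X : F[X]) - C c ≠ 0 := X_sub_C_ne_zero c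
  have hS2 : S * C β = (X - C 1) * g₂ * h := by
    apply mul_right_cancel₀ hXc
    calc S * C β * (X - C c) = S * (C β * X - 1) := by rw [hCβ]; ring
      _ = X ^ (q - 1) - 1 := hSgeom
      _ = (X - C 1) * ((g₂ * (X - C c)) * h) := by rw [hfact, hsplit]
      _ = (X - C 1) * g₂ * h * (X - C c) := by ring
  set P : F[X] := C c * (X - C 1) * h with hP
  have hSP : S = P * g₂ := by
    calc S = S * C β * C c := by rw [mul_assoc, ← C_mul, hβc, C_1, mul_one]
      _ = (X - C 1) * g₂ * h * C c := by rw [hS2]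
      _ = P * g₂ := by rw [hP]; ring
  set a : F := P.eval c with ha
  set l : F[X] := P /ₘ (X - C c) with hl
  have hdiv : (X - C c) * l + C a = P := by
    conv_rhs => rw [← modByMonic_add_div P (X - C c)]
    rw [modByMonic_X_sub_C_eq_C_eval, hl, ha]
    ring
  refine ⟨a, ?_, l, ?_, ?_⟩
  · -- a ≠ 0
    have haeq : a = c * ((c - 1) * ∏ i ∈ Finset.Ioc (d - 1) (q - 2), (c - α ^ i)) := by
      rw [ha, hP, hh]
      simp [eval_prod]
      ring
    rw [haeq]
    apply mul_ne_zero (pow_ne_zero _ hα0)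
    apply mul_ne_zero
    · rw [sub_ne_zero]
      intro hc1
      have : d - 1 = 0 := by
        apply hinj (d - 1) 0 (by omega) (by omega)
        rw [← hc, hc1, pow_zero]
      omega
    · rw [Finset.prod_ne_zero_iff]
      intro i hi
      rw [Finset.mem_Ioc] at hi
      rw [sub_ne_zero]
      intro hci
      have := hinj (d - 1) i (by omega) (by omega) (hc ▸ hci)
      omega
  · -- degree bound
    have hhdeg : h.natDegree ≤ k - 1 := by
      rw [hh]
      refine le_trans (natDegree_prod_le _ _) ?_
      have : ∀ i ∈ Finset.Ioc (d - 1) (q - 2), (X - C (α ^ i)).natDegree = 1 :=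
        fun i _ => natDegree_X_sub_C _
      rw [Finset.sum_congr rfl this, Finset.sum_const, smul_eq_mul, mul_one, Nat.card_Ioc]
      omega
    have hPdeg : P.natDegree ≤ k := by
      rw [hP]
      refine le_trans (natDegree_mul_le) ?_
      have h1 : (C c * (X - C 1)).natDegree ≤ 1 := by
        refine le_trans (natDegree_mul_le) ?_
        rw [natDegree_C, natDegree_X_sub_C]
      omega
    rw [hl, natDegree_divByMonic P (monic_X_sub_C c), natDegree_X_sub_C]
    omega
  · -- main identity
    calc C a * g₂ + l * g = ((X - C c) * l + C a) * g₂ := by rw [hgg2]; ring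
      _ = P * g₂ := by rw [hdiv]
      _ = S := hSP.symm
end
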